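/- For fixed integer k ≥ 1 and v in a neighbourhood of 1, the polynomial equation k!·v/(k+1)^k = ∏_{r=0}^{k-1}(α - r/(k+1)) in α has, at v = 1, the simple root α = k/(k+1), and this is the root with the largest real part among all k roots. -/

import Mathlib

/-!
With real nodes `a i < x`, the polynomial `f α = ∏ i, (α - a i)` takes the positive value
`∏ i, (x - a i)` at `x`, and `f' x = ∑ i, ∏ j ≠ i, (x - a j)` is a sum of positive terms.
If `Re α ≥ x` and `α ≠ x`, every factor satisfies `‖α - a i‖ > x - a i`, so `‖f α‖ > f x`
and `α` cannot solve `f α = f x`. For the characteristic equation the nodes are `r/(k+1)`,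
`r < k`, and `x = k/(k+1)`, where `f x = k!/(k+1)^k`.
-/

open Finset

namespace Complex

theorem lt_norm_of_le_re_of_ne {z : ℂ} {w : ℝ} (hre : w ≤ z.re) (hne : z ≠ w) : w < ‖z‖ := by
  rcases hre.lt_or_eq with hlt | heq
  · exact hlt.trans_le (re_le_norm z)
  · have him : z.im ≠ 0 := fun him => hne (ext (by simp [heq]) (by simp [him]))
    calc w = z.re := heq
      _ ≤ |z.re| := le_abs_self _
      _ < ‖z‖ := abs_re_lt_norm.2 him

variable {ι : Type*} {s : Finset ι} {a : ι → ℝ} {x : ℝ}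

theorem prod_sub_lt_norm_prod_sub (hs : s.Nonempty) (ha : ∀ i ∈ s, a i < x) {α : ℂ}
    (hre : x ≤ α.re) (hne : α ≠ x) :
    ∏ i ∈ s, (x - a i) < ‖∏ i ∈ s, (α - a i)‖ := by
  rw [norm_prod]
  refine prod_lt_prod_of_nonempty (fun i hi => sub_pos.2 (ha i hi)) (fun i _ => ?_) hs
  refine lt_norm_of_le_re_of_ne (by simpa using hre) fun h => hne ?_
  simpa using congrArg (· + (a i : ℂ)) h

theorem re_lt_of_prod_sub_eq (hs : s.Nonempty) (ha : ∀ i ∈ s, a i < x) {α : ℂ}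
    (hα : ∏ i ∈ s, (α - a i) = ∏ i ∈ s, ((x : ℂ) - a i)) (hne : α ≠ x) : α.re < x := by
  by_contra! hre
  have hpos : 0 ≤ ∏ i ∈ s, (x - a i) := prod_nonneg fun i hi => (sub_pos.2 (ha i hi)).le
  have hlt := prod_sub_lt_norm_prod_sub hs ha hre hne
  have hcast : ∏ i ∈ s, ((x : ℂ) - a i) = ((∏ i ∈ s, (x - a i) : ℝ) : ℂ) := by push_cast; rfl
  rw [hα, hcast, norm_real, Real.norm_of_nonneg hpos] at hlt
  exact hlt.false

theorem deriv_prod_sub_ne_zero [DecidableEq ι] (hs : s.Nonempty) (ha : ∀ i ∈ s, a i < x) :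
    deriv (fun α : ℂ => ∏ i ∈ s, (α - a i)) x ≠ 0 := by
  have hderiv : HasDerivAt (fun α : ℂ => ∏ i ∈ s, (α - a i))
      (∑ i ∈ s, ∏ j ∈ s.erase i, ((x : ℂ) - a j)) x := by
    simpa using HasDerivAt.fun_finsetProd fun i _ => (hasDerivAt_id (x : ℂ)).sub_const (a i : ℂ)
  have hpos : 0 < ∑ i ∈ s, ∏ j ∈ s.erase i, (x - a j) :=
    sum_pos (fun i _ => prod_pos fun j hj => sub_pos.2 (ha j (mem_of_mem_erase hj))) hs
  rw [hderiv.deriv]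
  exact_mod_cast hpos.ne'

end Complex

theorem prod_range_div_sub_div_eq_factorial_div {K : Type*} [Field K] (k : ℕ) :
    ∏ r ∈ range k, ((k : K) / (k + 1) - r / (k + 1)) = (Nat.factorial k : K) / (k + 1) ^ k := by
  have hfact : ∏ r ∈ range k, ((k : K) - r) = Nat.factorial k := by
    rw [← Nat.descFactorial_self, Nat.descFactorial_eq_prod_range, Nat.cast_prod]
    exact prod_congr rfl fun r hr => (Nat.cast_sub (mem_range.1 hr).le).symm
  simp_rw [div_sub_div_same]
  rw [prod_div_distrib, prod_const, card_range, hfact]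

theorem ktree_char_root (k : ℕ) (hk : 1 ≤ k) :
    (∏ r ∈ Finset.range k, (((k : ℂ) / ((k : ℂ) + 1)) - (r : ℂ) / ((k : ℂ) + 1))
        = (Nat.factorial k : ℂ) / ((k : ℂ) + 1) ^ k) ∧
    deriv (fun α : ℂ => ∏ r ∈ Finset.range k, (α - (r : ℂ) / ((k : ℂ) + 1)))
        ((k : ℂ) / ((k : ℂ) + 1)) ≠ 0 ∧
    (∀ α : ℂ, (∏ r ∈ Finset.range k, (α - (r : ℂ) / ((k : ℂ) + 1)))
        = (Nat.factorial k : ℂ) / ((k : ℂ) + 1) ^ k →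
      α ≠ (k : ℂ) / ((k : ℂ) + 1) → α.re < (k : ℝ) / ((k : ℝ) + 1)) := by
  have hs : (range k).Nonempty := nonempty_range_iff.2 (by omega)
  have ha : ∀ r ∈ range k, (r : ℝ) / (k + 1) < k / (k + 1) := fun r hr =>
    div_lt_div_of_pos_right (by exact_mod_cast mem_range.1 hr) (by positivity)
  have hnode : ∀ r : ℕ, (r : ℂ) / ((k : ℂ) + 1) = ((r / (k + 1) : ℝ) : ℂ) := fun r => by
    push_cast; rfl
  have hval := prod_range_div_sub_div_eq_factorial_div (K := ℂ) k
  refine ⟨hval, ?_, fun α hα hne => ?_⟩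
  · simpa only [hnode] using Complex.deriv_prod_sub_ne_zero hs ha
  · simp only [hnode] at hval hα hne
    exact Complex.re_lt_of_prod_sub_eq hs ha (hα.trans hval.symm) hne
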